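/- Let φ satisfy Assumption (φ) and be of type T(p, q, K₁) with 1 < p ≤ q < ∞. Then there is K > 0, depending only on K₁, p and q, such that for all δ ∈ (0, 1] and all t, s ≥ 0 the following Young-type inequalities hold: t·s ≤ K^{q̄} δ^{1−q̄} φ(t) + δ φ*(s), and t·s ≤ δ φ(t) + K^{p̄'−1} δ^{1−p̄'} φ*(s). -/

import Mathlib

open MeasureTheory Metric Set Filter
open scoped ENNReal RealInnerProductSpace Topology

noncomputable section

/-- `Eu n` is Euclidean space `ℝⁿ`. -/
abbrev Eu (n : ℕ) := EuclideanSpace ℝ (Fin n)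

/-- `Mat m n` is the space of real `m × n` matrices. -/
abbrev Mat (m n : ℕ) := Matrix (Fin m) (Fin n) ℝ

/-- The Frobenius inner product of matrices. -/
def frobInner {m n : ℕ} (P Q : Mat m n) : ℝ := ∑ i, ∑ j, P i j * Q i j

/-- The Frobenius norm of a matrix. -/
def frobNorm {m n : ℕ} (P : Mat m n) : ℝ := Real.sqrt (frobInner P P)

/-- The symmetric part of a square matrix. -/
def symPart {n : ℕ} (M : Mat n n) : Mat n n := (2⁻¹ : ℝ) • (M + M.transpose)

/-- The antisymmetric part of a square matrix. -/
def skewPart {n : ℕ} (M : Mat n n) : Mat n n := (2⁻¹ : ℝ) • (M - M.transpose)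

/-- The `j`-th standard basis vector of `ℝⁿ`. -/
def euBasis (n : ℕ) (j : Fin n) : Eu n := EuclideanSpace.single j 1

/-- Smooth compactly supported test functions with support inside `Ω`. -/
def IsTest {n : ℕ} {F : Type} [NormedAddCommGroup F] [NormedSpace ℝ F]
    (Ω : Set (Eu n)) (ξ : Eu n → F) : Prop :=
  ContDiff ℝ (⊤ : ℕ∞) ξ ∧ HasCompactSupport ξ ∧ tsupport ξ ⊆ Ω

/-- The gradient matrix `(∇ξ)_{ij} = ∂_j ξ_i` of a map `ξ : ℝⁿ → ℝᵐ`. -/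
def gradOf {n m : ℕ} (ξ : Eu n → Eu m) (x : Eu n) : Mat m n :=
  Matrix.of fun i j => fderiv ℝ (fun y => ξ y i) x (euBasis n j)

/-- The divergence of a vector field `ξ : ℝⁿ → ℝⁿ`. -/
def divOf {n : ℕ} (ξ : Eu n → Eu n) (x : Eu n) : ℝ := Matrix.trace (gradOf ξ x)

/-- `v` is locally integrable on `Ω` with weak gradient `dv` (an `m × n` matrix field). -/
def HasWeakGradOn {n m : ℕ} (v : Eu n → Eu m) (dv : Eu n → Mat m n) (Ω : Set (Eu n)) : Prop :=
  (∀ i, LocallyIntegrableOn (fun x => v x i) Ω) ∧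
  (∀ i j, LocallyIntegrableOn (fun x => dv x i j) Ω) ∧
  ∀ ξ : Eu n → ℝ, IsTest Ω ξ → ∀ (i : Fin m) (j : Fin n),
    ∫ x in Ω, v x i * fderiv ℝ ξ x (euBasis n j) = - ∫ x in Ω, dv x i j * ξ x

/-- A scalar function `f` has weak partial derivatives `df` on `Ω`. -/
def HasWeakPartialsOn {n : ℕ} (f : Eu n → ℝ) (df : Eu n → Fin n → ℝ) (Ω : Set (Eu n)) : Prop :=
  LocallyIntegrableOn f Ω ∧ (∀ j, LocallyIntegrableOn (fun x => df x j) Ω) ∧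
  ∀ ξ : Eu n → ℝ, IsTest Ω ξ → ∀ j : Fin n,
    ∫ x in Ω, f x * fderiv ℝ ξ x (euBasis n j) = - ∫ x in Ω, df x j * ξ x

/-- The mean `⟨f⟩_B` of a matrix-valued function over a set, computed entrywise. -/
def avgM {k m n : ℕ} (f : Eu k → Mat m n) (B : Set (Eu k)) : Mat m n :=
  Matrix.of fun i j => ⨍ x in B, f x i j

/-- Mean oscillation `M^♯_B f` of a scalar function over the ball of center `z`, radius `R`. -/
def MsharpS {n : ℕ} (f : Eu n → ℝ) (z : Eu n) (R : ℝ) : ℝ :=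
  ⨍ x in ball z R, |f x - ⨍ y in ball z R, f y|

/-- Mean oscillation `M^♯_B f` of a matrix-valued function over the ball of center `z`,
radius `R`. -/
def MsharpM {k m n : ℕ} (f : Eu k → Mat m n) (z : Eu k) (R : ℝ) : ℝ :=
  ⨍ x in ball z R, frobNorm (f x - avgM f (ball z R))

/-- The weighted `BMO_ω` seminorm of a scalar function on `U` (valued in `ℝ≥0∞`);
`ω(r) = r^β` gives the Campanato seminorm `𝓛^{1,2+β}` and `ω ≡ 1` the `BMO` seminorm. -/
def BMOS {n : ℕ} (ω : ℝ → ℝ) (f : Eu n → ℝ) (U : Set (Eu n)) : ℝ≥0∞ :=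
  ⨆ (z : Eu n) (R : ℝ) (_ : 0 < R) (_ : ball z R ⊆ U),
    ENNReal.ofReal ((ω R)⁻¹ * MsharpS f z R)

/-- The weighted `BMO_ω` seminorm of a matrix-valued function on `U`. -/
def BMOM {k m n : ℕ} (ω : ℝ → ℝ) (f : Eu k → Mat m n) (U : Set (Eu k)) : ℝ≥0∞ :=
  ⨆ (z : Eu k) (R : ℝ) (_ : 0 < R) (_ : ball z R ⊆ U),
    ENNReal.ofReal ((ω R)⁻¹ * MsharpM f z R)

/-- Vanishing mean oscillation for scalar functions:
`sup { M^♯_Q f : balls Q ⊆ U, |Q| < ε } → 0` as `ε → 0⁺`. -/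
def IsVMOS {n : ℕ} (f : Eu n → ℝ) (U : Set (Eu n)) : Prop :=
  ∀ δ : ℝ, 0 < δ → ∃ ε : ℝ, 0 < ε ∧ ∀ (z : Eu n) (R : ℝ), 0 < R → ball z R ⊆ U →
    volume (ball z R) < ENNReal.ofReal ε → MsharpS f z R ≤ δ

/-- Vanishing mean oscillation for matrix-valued functions. -/
def IsVMOM {k m n : ℕ} (f : Eu k → Mat m n) (U : Set (Eu k)) : Prop :=
  ∀ δ : ℝ, 0 < δ → ∃ ε : ℝ, 0 < ε ∧ ∀ (z : Eu k) (R : ℝ), 0 < R → ball z R ⊆ U →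
    volume (ball z R) < ENNReal.ofReal ε → MsharpM f z R ≤ δ

/-- `φ` is an N-function with (right-)derivative `φ'`. -/
structure IsNFunction (φ φ' : ℝ → ℝ) : Prop where
  zero : φ 0 = 0
  convex : ConvexOn ℝ (Ici 0) φ
  hasDeriv : ∀ t ∈ Ici (0 : ℝ), HasDerivWithinAt φ (φ' t) (Ici 0) t
  rightCont : ∀ t ∈ Ici (0 : ℝ), ContinuousWithinAt φ' (Ici t) t
  mono : MonotoneOn φ' (Ici 0)
  derivZero : φ' 0 = 0
  derivPos : ∀ t : ℝ, 0 < t → 0 < φ' t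

/-- The complementary (conjugate) N-function `φ*(u) = sup_{t ≥ 0} (u t − φ(t))`. -/
def conjFn (φ : ℝ → ℝ) (u : ℝ) : ℝ := sSup ((fun t => u * t - φ t) '' Ici 0)

/-- The shifted N-function `φ_a(t) = ∫₀ᵗ φ'(a+s)·s/(a+s) ds`, described by the
derivative `φ'` of `φ`. -/
def shiftFn (φ' : ℝ → ℝ) (a t : ℝ) : ℝ := ∫ s in (0 : ℝ)..t, φ' (a + s) * s / (a + s)

/-- The derivative `(φ_a)'(t) = φ'(a+t)·t/(a+t)` of the shifted N-function. -/
def shiftDeriv (φ' : ℝ → ℝ) (a t : ℝ) : ℝ := φ' (a + t) * t / (a + t)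

/-- The right-continuous inverse of a non-decreasing function, used as the derivative
of the complementary function: `(φ*)' = (φ')⁻¹`. -/
def rcInv (g : ℝ → ℝ) (t : ℝ) : ℝ := sSup {s : ℝ | 0 ≤ s ∧ g s ≤ t}

/-- The function `V(Q) = (φ'(|Q|)|Q|)^{1/2} Q/|Q|`, `V(0) = 0`. -/
def Vfn (φ' : ℝ → ℝ) (Q : Mat 2 2) : Mat 2 2 :=
  if Q = 0 then 0 else (Real.sqrt (φ' (frobNorm Q) * frobNorm Q) / frobNorm Q) • Q

/-- `ψ` is of type `T(p, q, K)`: `ψ(st) ≤ K max{s^p, s^q} ψ(t)` for all `s, t ≥ 0`. -/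
def TypeT (ψ : ℝ → ℝ) (p q K : ℝ) : Prop :=
  ∀ s t : ℝ, 0 ≤ s → 0 ≤ t → ψ (s * t) ≤ K * max (s ^ p) (s ^ q) * ψ t

/-- `p̄ = min{p, 2}`. -/
def pbar (p : ℝ) : ℝ := min p 2

/-- `q̄ = max{q, 2}`. -/
def qbar (q : ℝ) : ℝ := max q 2

/-- The Hölder-conjugate exponent `p' = p/(p−1)`. -/
def conjExp (p : ℝ) : ℝ := p / (p - 1)

/-- Assumption (φ), with the characteristics `c₀, c₁, cm` of `φ` made explicit:
`φ` is an N-function, `C²` on `(0,∞)` and `C¹` on `[0,∞)`, `φ''` is almost monotone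
(with constant `cm`) and `c₀ t φ''(t) ≤ φ'(t) ≤ c₁ t φ''(t)` for `t > 0`. -/
structure AssumptionPhi (φ φ' φ'' : ℝ → ℝ) (c₀ c₁ cm : ℝ) : Prop where
  nfun : IsNFunction φ φ'
  contDiffTwo : ContDiffOn ℝ 2 φ (Ioi 0)
  contOne : ContinuousOn φ' (Ici 0)
  derivTwo : ∀ t : ℝ, 0 < t → HasDerivAt φ' (φ'' t) t
  cm_pos : 0 < cm
  almostMono : (∀ s t : ℝ, 0 < s → s ≤ t → φ'' s ≤ cm * φ'' t) ∨
               (∀ s t : ℝ, 0 < s → s ≤ t → cm * φ'' t ≤ φ'' s)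
  c0_pos : 0 < c₀
  c1_pos : 0 < c₁
  lowerBound : ∀ t : ℝ, 0 < t → c₀ * (t * φ'' t) ≤ φ' t
  upperBound : ∀ t : ℝ, 0 < t → φ' t ≤ c₁ * (t * φ'' t)

/-- Assumption (A), with the constants `cA, CA` made explicit: `A` is continuous,
locally Lipschitz away from `0`, `A(0) = 0`, maps symmetric matrices to symmetric
matrices, and has non-standard `φ`-growth described by `φ''`. -/
structure AssumptionA (φ'' : ℝ → ℝ) (A : Mat 2 2 → Mat 2 2) (cA CA : ℝ) : Prop where
  cont : Continuous A
  locLip : ∀ P : Mat 2 2, P ≠ 0 → ∃ K ε : ℝ, 0 < ε ∧ ∀ Q₁ Q₂ : Mat 2 2,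
    frobNorm (Q₁ - P) < ε → frobNorm (Q₂ - P) < ε →
    frobNorm (A Q₁ - A Q₂) ≤ K * frobNorm (Q₁ - Q₂)
  zero : A 0 = 0
  symm : ∀ D : Mat 2 2, D.IsSymm → (A D).IsSymm
  cA_pos : 0 < cA
  CA_pos : 0 < CA
  coercive : ∀ P Q : Mat 2 2, P.IsSymm → Q.IsSymm → P ≠ 0 →
    cA * φ'' (frobNorm P + frobNorm Q) * frobNorm (P - Q) ^ 2 ≤
      frobInner (A P - A Q) (P - Q)
  growth : ∀ P Q : Mat 2 2, P.IsSymm → Q.IsSymm → P ≠ 0 →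
    frobNorm (A P - A Q) ≤ CA * φ'' (frobNorm P + frobNorm Q) * frobNorm (P - Q)

/-- A local weak solution `(u, π)` (with weak gradient `du` of `u`) of the generalized
Stokes system `−div A(Du) + ∇π = −div G`, `div u = 0` on `Ω`. -/
structure StokesSolution (φ φstar : ℝ → ℝ) (A : Mat 2 2 → Mat 2 2) (Ω : Set (Eu 2))
    (u : Eu 2 → Eu 2) (du : Eu 2 → Mat 2 2) (π : Eu 2 → ℝ) (G : Eu 2 → Mat 2 2) : Prop where
  grad : HasWeakGradOn u du Ω
  orliczGrad : ∀ K : Set (Eu 2), K ⊆ Ω → IsCompact K →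
    IntegrableOn (fun x => φ (frobNorm (du x))) K
  divFree : ∀ᵐ x ∂(volume.restrict Ω), Matrix.trace (du x) = 0
  piLocInt : LocallyIntegrableOn π Ω
  orliczPi : ∀ K : Set (Eu 2), K ⊆ Ω → IsCompact K →
    IntegrableOn (fun x => φstar |π x|) K
  GLocInt : ∀ i j, LocallyIntegrableOn (fun x => G x i j) Ω
  GSymm : ∀ x, (G x).IsSymm
  weakForm : ∀ ξ : Eu 2 → Eu 2, IsTest Ω ξ →
    (∫ x in Ω, frobInner (A (symPart (du x))) (symPart (gradOf ξ x)))
      - ∫ x in Ω, π x * divOf ξ x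
    = ∫ x in Ω, frobInner (G x) (symPart (gradOf ξ x))

/-- A local weak solution `h` (with weak gradient `dh`) of the homogeneous generalized
Stokes system `−div A(Dh) + ∇ρ = 0`, `div h = 0` on `U` (tested with divergence-free
test functions, which eliminates the pressure). -/
structure HomogStokes (φ : ℝ → ℝ) (A : Mat 2 2 → Mat 2 2) (U : Set (Eu 2))
    (h : Eu 2 → Eu 2) (dh : Eu 2 → Mat 2 2) : Prop where
  grad : HasWeakGradOn h dh U
  orliczGrad : ∀ K : Set (Eu 2), K ⊆ U → IsCompact K →
    IntegrableOn (fun x => φ (frobNorm (dh x))) K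
  divFree : ∀ᵐ x ∂(volume.restrict U), Matrix.trace (dh x) = 0
  weakForm : ∀ ξ : Eu 2 → Eu 2, IsTest U ξ → (∀ x, divOf ξ x = 0) →
    ∫ x in U, frobInner (A (symPart (dh x))) (symPart (gradOf ξ x)) = 0

/-! The inequalities are Young's inequality `t s ≤ φ(t) + φ*(s)` applied to rescaled
arguments. For the first, `t s = δ (t/δ) s` and `φ(t/δ) ≤ K₁ δ^{-q} φ(t)` by the type
condition. For the second, `t s = δ t (s/δ)`, and the type condition with `s ≤ 1` gives
`λ δ⁻¹ φ(r/λ) ≤ φ(r)` for `λ = (K₁/δ)^{1/(p-1)}`, whence `t (s/δ) ≤ φ(t) + λ δ⁻¹ φ*(s)`. The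
constants so obtained are then bounded by the ones with `q̄` and `p̄'`, using
`p̄' - 1 = 1/(p̄ - 1)`. The supremum defining `φ*(s)` is finite because the type condition
also forces the superlinear growth `φ(r) ≥ φ(1) r^p / K₁` for `r ≥ 1`. -/

theorem IsNFunction.strictMonoOn {φ φ' : ℝ → ℝ} (hφ : IsNFunction φ φ') :
    StrictMonoOn φ (Ici 0) := by
  refine strictMonoOn_of_deriv_pos (convex_Ici 0)
    (fun x hx => (hφ.hasDeriv x hx).continuousWithinAt) fun x hx => ?_
  rw [interior_Ici] at hx
  rw [((hφ.hasDeriv x (mem_Ici.mpr hx.le)).hasDerivAt (Ici_mem_nhds hx)).deriv]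
  exact hφ.derivPos x hx

theorem IsNFunction.nonneg {φ φ' : ℝ → ℝ} (hφ : IsNFunction φ φ') {t : ℝ} (ht : 0 ≤ t) :
    0 ≤ φ t :=
  hφ.zero ▸ hφ.strictMonoOn.monotoneOn self_mem_Ici ht ht

theorem IsNFunction.pos {φ φ' : ℝ → ℝ} (hφ : IsNFunction φ φ') {t : ℝ} (ht : 0 < t) :
    0 < φ t :=
  hφ.zero ▸ hφ.strictMonoOn self_mem_Ici ht.le ht

section TypeT

variable {φ : ℝ → ℝ} {p q K : ℝ}

theorem TypeT.le_of_one_le (hφ : TypeT φ p q K) (hpq : p ≤ q) {s t : ℝ} (hs : 1 ≤ s)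
    (ht : 0 ≤ t) : φ (s * t) ≤ K * s ^ q * φ t := by
  simpa [max_eq_right (Real.rpow_le_rpow_of_exponent_le hs hpq)] using
    hφ s t (by linarith) ht

theorem TypeT.le_of_le_one (hφ : TypeT φ p q K) (hpq : p ≤ q) {s t : ℝ} (hs₀ : 0 < s)
    (hs₁ : s ≤ 1) (ht : 0 ≤ t) : φ (s * t) ≤ K * s ^ p * φ t := by
  simpa [max_eq_left (Real.rpow_le_rpow_of_exponent_ge hs₀ hs₁ hpq)] using
    hφ s t hs₀.le ht

theorem TypeT.one_le_const (hφ : TypeT φ p q K) (h₁ : 0 < φ 1) : 1 ≤ K := by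
  have h := hφ 1 1 zero_le_one zero_le_one
  simp only [mul_one, Real.one_rpow, max_self] at h
  exact (le_mul_iff_one_le_left h₁).mp h

theorem TypeT.mul_rpow_le (hφ : TypeT φ p q K) (hpq : p ≤ q) {r : ℝ} (hr : 1 ≤ r) :
    φ 1 * r ^ p ≤ K * φ r := by
  have hr₀ : 0 < r := by linarith
  have h := hφ.le_of_le_one hpq (inv_pos.mpr hr₀) (inv_le_one_of_one_le₀ hr) hr₀.le
  rw [inv_mul_cancel₀ hr₀.ne', Real.inv_rpow hr₀.le] at h
  have hrp : 0 < r ^ p := Real.rpow_pos_of_pos hr₀ p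
  calc φ 1 * r ^ p ≤ K * (r ^ p)⁻¹ * φ r * r ^ p := by gcongr
    _ = K * φ r := by field_simp

end TypeT

section conjFn

variable {φ : ℝ → ℝ} {u : ℝ}

theorem le_conjFn (hu : BddAbove ((fun t => u * t - φ t) '' Ici 0)) {t : ℝ} (ht : 0 ≤ t) :
    u * t - φ t ≤ conjFn φ u :=
  le_csSup hu ⟨t, ht, rfl⟩

theorem conjFn_nonneg (h₀ : φ 0 = 0) (hu : BddAbove ((fun t => u * t - φ t) '' Ici 0)) :
    0 ≤ conjFn φ u := by
  simpa [h₀] using le_conjFn hu le_rfl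

theorem mul_le_add_conjFn (hu : BddAbove ((fun t => u * t - φ t) '' Ici 0)) {t : ℝ}
    (ht : 0 ≤ t) : t * u ≤ φ t + conjFn φ u := by
  linarith [le_conjFn hu ht]

theorem bddAbove_image_mul_sub_of_eventually_le (hφ : ∀ t, 0 ≤ t → 0 ≤ φ t) (hu : 0 ≤ u)
    (h : ∀ᶠ t in atTop, u * t ≤ φ t) : BddAbove ((fun t => u * t - φ t) '' Ici 0) := by
  obtain ⟨R, hR⟩ := eventually_atTop.mp h
  refine ⟨u * max R 0, ?_⟩
  rintro _ ⟨t, ht, rfl⟩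
  rcases le_total R t with hRt | htR
  · nlinarith [hR t hRt, mul_nonneg hu (le_max_right R 0)]
  · nlinarith [hφ t ht, mul_le_mul_of_nonneg_left (htR.trans (le_max_left R 0)) hu]

theorem bddAbove_image_mul_sub_of_rpow_le {p c : ℝ} (hp : 1 < p) (hc : 0 < c)
    (hφ : ∀ t, 0 ≤ t → 0 ≤ φ t) (hgrowth : ∀ t, 1 ≤ t → c * t ^ p ≤ φ t) (hu : 0 ≤ u) :
    BddAbove ((fun t => u * t - φ t) '' Ici 0) := by
  refine bddAbove_image_mul_sub_of_eventually_le hφ hu ?_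
  filter_upwards [(tendsto_rpow_atTop (sub_pos.mpr hp)).eventually_ge_atTop (u / c),
    eventually_ge_atTop 1] with t hpow ht
  have ht₀ : 0 < t := by linarith
  calc u * t ≤ c * t ^ (p - 1) * t := by
        gcongr
        rwa [← div_le_iff₀' hc]
    _ = c * t ^ p := by rw [Real.rpow_sub_one ht₀.ne']; field_simp
    _ ≤ φ t := hgrowth t ht

theorem mul_le_add_mul_conjFn {a b r : ℝ} (ha : 0 ≤ a) (hb : 0 ≤ b)
    (hu : BddAbove ((fun t => u * t - φ t) '' Ici 0))
    (h : ∀ r, 0 ≤ r → a * φ (b * r) ≤ φ r) (hr : 0 ≤ r) :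
    a * b * u * r ≤ φ r + a * conjFn φ u := by
  have := mul_le_mul_of_nonneg_left (le_conjFn hu (mul_nonneg hb hr)) ha
  linarith [h r hr]

end conjFn

section Young

variable {φ : ℝ → ℝ} {p q K δ t s : ℝ}

theorem TypeT.mul_le_rpow_mul_add_conjFn (hφ : TypeT φ p q K) (hpq : p ≤ q)
    (hs : BddAbove ((fun r => s * r - φ r) '' Ici 0)) (hδ : 0 < δ) (hδ₁ : δ ≤ 1)
    (ht : 0 ≤ t) : t * s ≤ K * δ ^ (1 - q) * φ t + δ * conjFn φ s := by
  have hscale := hφ.le_of_one_le hpq (one_le_inv_iff₀.mpr ⟨hδ, hδ₁⟩) ht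
  have hyoung := mul_le_add_conjFn hs (mul_nonneg (inv_pos.mpr hδ).le ht)
  have hδq : δ ^ (1 - q) = δ * δ⁻¹ ^ q := by
    rw [Real.rpow_sub hδ, Real.rpow_one, Real.inv_rpow hδ.le, div_eq_mul_inv]
  calc t * s = δ * (δ⁻¹ * t * s) := by field_simp
    _ ≤ δ * (K * δ⁻¹ ^ q * φ t + conjFn φ s) := by gcongr; linarith
    _ = K * δ ^ (1 - q) * φ t + δ * conjFn φ s := by rw [hδq]; ring

theorem TypeT.mul_le_add_rpow_mul_conjFn (hφ : TypeT φ p q K) (hp : 1 < p) (hpq : p ≤ q)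
    (hK : 1 ≤ K) (hs : BddAbove ((fun r => s * r - φ r) '' Ici 0)) (hδ : 0 < δ)
    (hδ₁ : δ ≤ 1) (ht : 0 ≤ t) : t * s ≤ δ * φ t + (K / δ) ^ (p - 1)⁻¹ * conjFn φ s := by
  set l := (K / δ) ^ (p - 1)⁻¹
  have hKδ : 1 ≤ K / δ := by rw [le_div_iff₀ hδ]; linarith
  have hl₁ : 1 ≤ l := Real.one_le_rpow hKδ (inv_nonneg.mpr (by linarith))
  have hl₀ : 0 < l := by linarith
  have hlp : l ^ p = K / δ * l := by
    rw [← sub_add_cancel p 1, Real.rpow_add_one hl₀.ne', ← Real.rpow_mul (by linarith),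
      inv_mul_cancel₀ (by linarith), Real.rpow_one]
  have hscale : ∀ r, 0 ≤ r → l / δ * φ (l⁻¹ * r) ≤ φ r := by
    intro r hr
    have h := hφ.le_of_le_one hpq (inv_pos.mpr hl₀) (inv_le_one_of_one_le₀ hl₁) hr
    rw [Real.inv_rpow hl₀.le, hlp] at h
    calc l / δ * φ (l⁻¹ * r) ≤ l / δ * (K * (K / δ * l)⁻¹ * φ r) := by gcongr
      _ = φ r := by field_simp
  have hyoung := mul_le_add_mul_conjFn (by positivity) (inv_pos.mpr hl₀).le hs hscale ht
  calc t * s = δ * (l / δ * l⁻¹ * s * t) := by field_simp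
    _ ≤ δ * (φ t + l / δ * conjFn φ s) := by gcongr
    _ = δ * φ t + l * conjFn φ s := by field_simp

end Young

theorem conjExp_sub_one {p : ℝ} (hp : p ≠ 1) : conjExp p - 1 = (p - 1)⁻¹ := by
  have : p - 1 ≠ 0 := sub_ne_zero.mpr hp
  rw [conjExp]
  field_simp
  ring

section Constants

variable {K₀ K δ : ℝ}

theorem mul_rpow_one_sub_le_rpow_mul_rpow_one_sub {q Q : ℝ} (hK₀ : K₀ ≤ K) (hK : 1 ≤ K)
    (hδ : 0 < δ) (hδ₁ : δ ≤ 1) (hqQ : q ≤ Q) (hQ : 1 ≤ Q) :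
    K₀ * δ ^ (1 - q) ≤ K ^ Q * δ ^ (1 - Q) := by
  have hKQ : K₀ ≤ K ^ Q := hK₀.trans (Real.self_le_rpow_of_one_le hK hQ)
  have hδQ : δ ^ (1 - q) ≤ δ ^ (1 - Q) :=
    Real.rpow_le_rpow_of_exponent_ge hδ hδ₁ (by linarith)
  exact mul_le_mul hKQ hδQ (by positivity) (by positivity)

theorem div_rpow_inv_le_rpow_conjExp_mul_rpow {p P : ℝ} (hK₀ : 0 ≤ K₀) (hK₀K : K₀ ≤ K)
    (hK : 1 ≤ K) (hδ : 0 < δ) (hδ₁ : δ ≤ 1) (hP : 1 < P) (hPp : P ≤ p) :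
    (K₀ / δ) ^ (p - 1)⁻¹ ≤ K ^ (conjExp P - 1) * δ ^ (1 - conjExp P) := by
  have hKδ : 1 ≤ K / δ := by rw [le_div_iff₀ hδ]; linarith
  have hexp : (p - 1)⁻¹ ≤ (P - 1)⁻¹ := inv_anti₀ (by linarith) (by linarith)
  have hrhs : K ^ (conjExp P - 1) * δ ^ (1 - conjExp P) = (K / δ) ^ (P - 1)⁻¹ := by
    rw [show 1 - conjExp P = -(conjExp P - 1) by ring, conjExp_sub_one hP.ne',
      Real.rpow_neg hδ.le, Real.div_rpow (by linarith) hδ.le, div_eq_mul_inv]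
  calc (K₀ / δ) ^ (p - 1)⁻¹ ≤ (K / δ) ^ (p - 1)⁻¹ := by
        gcongr
        exact inv_nonneg.mpr (by linarith)
    _ ≤ (K / δ) ^ (P - 1)⁻¹ := Real.rpow_le_rpow_of_exponent_le hKδ hexp
    _ = _ := hrhs.symm

end Constants

/-- **Young's inequalities (2.9).** If `φ` satisfies Assumption (φ) and is of type
`T(p, q, K₁)`, there is `K > 0` depending only on `K₁, p, q` such that for all
`δ ∈ (0,1]` and `t, s ≥ 0`:
`t s ≤ K^{q̄} δ^{1−q̄} φ(t) + δ φ*(s)` and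
`t s ≤ δ φ(t) + K^{p̄'−1} δ^{1−p̄'} φ*(s)`. -/
theorem young_type_inequalities (p q K₁ : ℝ) (hp : 1 < p) (hpq : p ≤ q) :
    ∃ K : ℝ, 0 < K ∧
      ∀ (φ φ' φ'' : ℝ → ℝ) (c₀ c₁ cm : ℝ),
        AssumptionPhi φ φ' φ'' c₀ c₁ cm → TypeT φ p q K₁ →
        ∀ δ t s : ℝ, 0 < δ → δ ≤ 1 → 0 ≤ t → 0 ≤ s →
          t * s ≤ K ^ qbar q * δ ^ (1 - qbar q) * φ t + δ * conjFn φ s ∧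
          t * s ≤ δ * φ t
            + K ^ (conjExp (pbar p) - 1) * δ ^ (1 - conjExp (pbar p)) * conjFn φ s := by
  refine ⟨max K₁ 1, by positivity, fun φ φ' φ'' c₀ c₁ cm hφ hT δ t s hδ hδ₁ ht hs => ?_⟩
  have hN := hφ.nfun
  have hK₁ : 1 ≤ K₁ := hT.one_le_const (hN.pos one_pos)
  have hbdd : BddAbove ((fun r => s * r - φ r) '' Ici 0) := by
    refine bddAbove_image_mul_sub_of_rpow_le hp (div_pos (hN.pos one_pos) (by linarith))
      (fun r hr => hN.nonneg hr) (fun r hr => ?_) hs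
    rw [div_mul_eq_mul_div, div_le_iff₀' (by linarith)]
    exact hT.mul_rpow_le hpq hr
  have hφt := hN.nonneg ht
  have hconj := conjFn_nonneg hN.zero hbdd
  constructor
  · refine (hT.mul_le_rpow_mul_add_conjFn hpq hbdd hδ hδ₁ ht).trans ?_
    gcongr ?_ * φ t + _
    exact mul_rpow_one_sub_le_rpow_mul_rpow_one_sub (le_max_left K₁ 1) (le_max_right K₁ 1)
      hδ hδ₁ (le_max_left q 2) (le_max_of_le_right one_le_two)
  · refine (hT.mul_le_add_rpow_mul_conjFn hp hpq hK₁ hbdd hδ hδ₁ ht).trans ?_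
    gcongr _ + ?_ * conjFn φ s
    exact div_rpow_inv_le_rpow_conjExp_mul_rpow (by linarith) (le_max_left K₁ 1)
      (le_max_right K₁ 1) hδ hδ₁ (lt_min hp one_lt_two) (min_le_left p 2)

end
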